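/- For every x ∈ ℝ, the sequence aₙ = log ℙ(X̄ₙ ≥ x) is superadditive: a_{m+n} ≥ aₘ + aₙ for all m, n ≥ 1, where values are in [-∞, 0]. -/

import Mathlib

/-!
Let `A` be the event that the first `m` variables have mean at least `x`, and `B` the event that
`X_m, …, X_{m+n-1}` do. On `A ∩ B` the mean of the first `m + n` variables is at least `x`; `A` and
`B` are independent, and `B` has the probability of `{X̄ₙ ≥ x}` because the second block has the
law of the first `n` variables. Hence `ℙ(X̄ₘ ≥ x) ℙ(X̄ₙ ≥ x) ≤ ℙ(X̄ₘ₊ₙ ≥ x)`, and `log` turns this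
product into a sum.
-/

open MeasureTheory ProbabilityTheory Filter Topology

/-- Empirical mean of the first `n` variables. -/
noncomputable def empMean {Ω : Type*} (X : ℕ → Ω → ℝ) (n : ℕ) (ω : Ω) : ℝ :=
  (∑ i ∈ Finset.range n, X i ω) / n

/-- The entropy `s(x) = sup_{n ≥ 1} (1/n) log ℙ(X̄ₙ ≥ x)`, with values in `[-∞, 0]`. -/
noncomputable def entropy {Ω : Type*} [MeasurableSpace Ω] (μ : Measure Ω)
    (X : ℕ → Ω → ℝ) (x : ℝ) : EReal :=
  ⨆ n : ℕ, ⨆ _ : 1 ≤ n, (((n : ℝ)⁻¹ : ℝ) : EReal) *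
    ENNReal.log (μ {ω | x ≤ empMean X n ω})

/-- The pressure `p(λ) = log 𝔼(e^{λ X₁})`, with values in `(-∞, ∞]`. -/
noncomputable def pressure {Ω : Type*} [MeasurableSpace Ω] (μ : Measure Ω)
    (X : ℕ → Ω → ℝ) (l : ℝ) : EReal :=
  ENNReal.log (∫⁻ ω, ENNReal.ofReal (Real.exp (l * X 0 ω)) ∂μ)

open Finset

lemma setOf_le_empMean_eq_preimage {Ω : Type*} (X : ℕ → Ω → ℝ) (x : ℝ) {n : ℕ} (hn : 1 ≤ n) :
    {ω | x ≤ empMean X n ω} = (∑ i ∈ range n, X i) ⁻¹' Set.Ici (x * n) := by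
  ext ω
  simp [empMean, le_div_iff₀ (show (0 : ℝ) < n by exact_mod_cast hn)]

namespace ProbabilityTheory

variable {Ω : Type*} [MeasurableSpace Ω] {μ : Measure Ω}

lemma iIndepFun.indepFun_finsetSum_finsetSum {ι β : Type*} [MeasurableSpace β] [AddCommMonoid β]
    [MeasurableAdd₂ β] {X : ι → Ω → β} (hindep : iIndepFun X μ) (hmeas : ∀ i, Measurable (X i))
    {S T : Finset ι} (hST : Disjoint S T) :
    IndepFun (∑ i ∈ S, X i) (∑ i ∈ T, X i) μ := by
  have h := (hindep.indepFun_finset S T hST hmeas).comp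
    (φ := fun v : S → β ↦ ∑ i, v i) (ψ := fun v : T → β ↦ ∑ i, v i) (by fun_prop) (by fun_prop)
  convert h using 1 <;> ext ω <;>
    simp [Finset.sum_apply, ← sum_attach S, ← sum_attach T]

lemma iIndepFun.identDistrib_sum_range_add {X : ℕ → Ω → ℝ} (hindep : iIndepFun X μ)
    (hident : ∀ i, IdentDistrib (X i) (X 0) μ μ) (m n : ℕ) :
    IdentDistrib (∑ i ∈ range n, X (m + i)) (∑ i ∈ range n, X i) μ μ := by
  have htuple := IdentDistrib.pi (ι := Fin n) (X := fun i ↦ X (m + i)) (Y := fun i ↦ X i)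
    (fun i ↦ (hident _).trans (hident _).symm)
    (hindep.precomp fun i j h ↦ Fin.ext (by simpa using h)) (hindep.precomp Fin.val_injective)
  convert htuple.comp (u := fun v : Fin n → ℝ ↦ ∑ i, v i) (by fun_prop) using 1 <;>
    ext ω <;>
    simp [Fin.sum_univ_eq_sum_range (fun i ↦ X (m + i) ω),
      Fin.sum_univ_eq_sum_range (fun i ↦ X i ω)]

lemma measure_le_empMean_mul_le_add {X : ℕ → Ω → ℝ} (hmeas : ∀ i, Measurable (X i))
    (hindep : iIndepFun X μ) (hident : ∀ i, IdentDistrib (X i) (X 0) μ μ) (x : ℝ) {m n : ℕ}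
    (hm : 1 ≤ m) (hn : 1 ≤ n) :
    μ {ω | x ≤ empMean X m ω} * μ {ω | x ≤ empMean X n ω} ≤ μ {ω | x ≤ empMean X (m + n) ω} := by
  set S := ∑ i ∈ range m, X i
  set T := ∑ i ∈ range n, X (m + i)
  have hST : IndepFun S T μ := by
    have h := hindep.indepFun_finsetSum_finsetSum hmeas (S := range m) (T := Ico m (m + n))
      (disjoint_left.2 fun i hi hi' ↦ by simp only [mem_range, mem_Ico] at hi hi'; omega)
    rwa [sum_Ico_eq_sum_range, add_tsub_cancel_left] at h
  have hT : μ (T ⁻¹' Set.Ici (x * n)) = μ {ω | x ≤ empMean X n ω} := by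
    rw [setOf_le_empMean_eq_preimage X x hn]
    exact (hindep.identDistrib_sum_range_add hident m n).measure_mem_eq measurableSet_Ici
  have hsubset : S ⁻¹' Set.Ici (x * m) ∩ T ⁻¹' Set.Ici (x * n) ⊆
      (S + T) ⁻¹' Set.Ici (x * ↑(m + n)) := by
    rintro ω ⟨hSω, hTω⟩
    simp only [Set.mem_preimage, Set.mem_Ici, Pi.add_apply, Nat.cast_add] at hSω hTω ⊢
    linarith
  rw [setOf_le_empMean_eq_preimage X x hm, ← hT,
    ← hST.measure_inter_preimage_eq_mul _ _ measurableSet_Ici measurableSet_Ici,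
    setOf_le_empMean_eq_preimage X x (by omega), sum_range_add]
  exact measure_mono hsubset

end ProbabilityTheory

theorem log_prob_superadditive_general {Ω : Type*} [MeasurableSpace Ω] (μ : Measure Ω)
    (X : ℕ → Ω → ℝ) (hmeas : ∀ i, Measurable (X i))
    (hindep : iIndepFun X μ)
    (hident : ∀ i, IdentDistrib (X i) (X 0) μ μ) (x : ℝ) (m n : ℕ) (hm : 1 ≤ m) (hn : 1 ≤ n) :
    ENNReal.log (μ {ω | x ≤ empMean X m ω}) + ENNReal.log (μ {ω | x ≤ empMean X n ω}) ≤
      ENNReal.log (μ {ω | x ≤ empMean X (m + n) ω}) := by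
  rw [← ENNReal.log_mul_add]
  exact ENNReal.log_monotone (measure_le_empMean_mul_le_add hmeas hindep hident x hm hn)

theorem log_prob_superadditive {Ω : Type*} [MeasurableSpace Ω] (μ : Measure Ω) [IsProbabilityMeasure μ]
    (X : ℕ → Ω → ℝ) (hmeas : ∀ i, Measurable (X i))
    (hindep : iIndepFun X μ)
    (hident : ∀ i, IdentDistrib (X i) (X 0) μ μ) (x : ℝ) (m n : ℕ) (hm : 1 ≤ m) (hn : 1 ≤ n) :
    ENNReal.log (μ {ω | x ≤ empMean X m ω}) + ENNReal.log (μ {ω | x ≤ empMean X n ω}) ≤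
      ENNReal.log (μ {ω | x ≤ empMean X (m + n) ω}) :=
  log_prob_superadditive_general μ X hmeas hindep hident x m n hm hn
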